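/- For the ring Z[ε] = Z[T]/(T²) of dual integers, the modules (6Z ⊆ Z) ⊕ (Z ⊆ Z) and (2Z ⊆ Z) ⊕ (3Z ⊆ Z) — each viewed as a Z[ε]-module A ⊕ B with ε acting by the inclusion A → B as in (a,b) ↦ (0, u(a)) — are isomorphic as Z[ε]-modules, yet (6Z ⊆ Z) is isomorphic to neither (2Z ⊆ Z) nor (3Z ⊆ Z). Hence the Krull–Remak–Schmidt property fails for Gorenstein-projective Z[ε]-modules. -/

import Mathlib

/-!
The `b`-components are transformed by `[[1,2],[1,3]]`, which maps `6ℤ ⊕ ℤ` onto `2ℤ ⊕ 3ℤ`;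
the `a`-components must then follow by `[[3,1],[2,1]]`, both matrices having determinant `1`.

Conversely, an intertwiner `ψ` of `eps d` and `eps e` with `d ≠ 0` preserves the kernel
`0 × ℤ` of `ε`, so its first coordinate factors through `a`; surjectivity forces the induced
scalar `(ψ (1, 0)).1` to be a unit, and comparing `ψ (ε (1, 0))` with `ε (ψ (1, 0))` gives
`d ∣ e`. As `6 ∤ 2` and `6 ∤ 3`, `(6ℤ ⊆ ℤ)` is isomorphic to neither summand.
-/

/-- The differential on `ℤ × ℤ` corresponding to the `ℤ[ε]`-module given by the
subgroup embedding `dℤ ⊆ ℤ` (with `dℤ ≅ ℤ` via multiplication by `d`):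
`ε · (a, b) = (0, d * a)`. -/
def eps (d : ℤ) : (ℤ × ℤ) →ₗ[ℤ] (ℤ × ℤ) :=
  LinearMap.prod 0 (d • LinearMap.fst ℤ ℤ ℤ)

@[simp]
lemma eps_apply (d : ℤ) (x : ℤ × ℤ) : eps d x = (0, d * x.1) := by
  simp [eps]

lemma dvd_of_eps_intertwined {d e : ℤ} (hd : d ≠ 0) (ψ : (ℤ × ℤ) ≃ₗ[ℤ] (ℤ × ℤ))
    (hψ : ∀ x, ψ (eps d x) = eps e (ψ x)) : d ∣ e := by
  set P := ψ (1, 0)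
  set Q := ψ (0, 1)
  have hεP : d • Q = (0, e * P.1) := by
    rw [← map_smul, ← eps_apply, ← hψ, eps_apply, Prod.smul_mk, smul_zero, smul_eq_mul, mul_one]
  have hQ1 : Q.1 = 0 := by
    have := congrArg Prod.fst hεP
    simp only [Prod.smul_fst, smul_eq_mul] at this
    exact (mul_eq_zero.mp this).resolve_left hd
  have hP1 : IsUnit P.1 := by
    obtain ⟨v, hv⟩ := ψ.surjective (1, 0)
    have hdecomp : ψ v = v.1 • P + v.2 • Q := by
      rw [← map_smul, ← map_smul, ← map_add]
      simp
    have := congrArg Prod.fst (hdecomp.symm.trans hv)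
    simp only [Prod.fst_add, Prod.smul_fst, smul_eq_mul, hQ1, mul_zero, add_zero] at this
    exact .of_mul_eq_one_right _ this
  have hdiv : d * Q.2 = e * P.1 := by simpa using congrArg Prod.snd hεP
  exact (hP1.dvd_mul_right).mp ⟨Q.2, hdiv.symm⟩

def eps6OneEquivEps2Three : ((ℤ × ℤ) × (ℤ × ℤ)) ≃ₗ[ℤ] ((ℤ × ℤ) × (ℤ × ℤ)) where
  toFun x := ((3 * x.1.1 + x.2.1, x.1.2 + 2 * x.2.2), (2 * x.1.1 + x.2.1, x.1.2 + 3 * x.2.2))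
  invFun x := ((x.1.1 - x.2.1, 3 * x.1.2 - 2 * x.2.2), (-2 * x.1.1 + 3 * x.2.1, -x.1.2 + x.2.2))
  map_add' x y := by ext <;> simp only [Prod.fst_add, Prod.snd_add] <;> ring
  map_smul' c x := by ext <;> simp only [Prod.smul_fst, Prod.smul_snd, smul_eq_mul,
    RingHom.id_apply] <;> ring
  left_inv x := by ext <;> dsimp only <;> ring
  right_inv x := by ext <;> dsimp only <;> ring

lemma eps6OneEquivEps2Three_intertwines (x : (ℤ × ℤ) × (ℤ × ℤ)) :
    eps6OneEquivEps2Three ((eps 6).prodMap (eps 1) x) =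
      (eps 2).prodMap (eps 3) (eps6OneEquivEps2Three x) := by
  simp only [eps6OneEquivEps2Three, LinearEquiv.coe_mk, LinearMap.coe_mk, AddHom.coe_mk,
    LinearMap.prodMap_apply, eps_apply]
  congr 2 <;> ring

theorem stmt0 :
    (∃ φ : ((ℤ × ℤ) × (ℤ × ℤ)) ≃ₗ[ℤ] ((ℤ × ℤ) × (ℤ × ℤ)),
      ∀ x, φ (((eps 6).prodMap (eps 1)) x) = ((eps 2).prodMap (eps 3)) (φ x)) ∧
    (¬ ∃ ψ : (ℤ × ℤ) ≃ₗ[ℤ] (ℤ × ℤ), ∀ x, ψ (eps 6 x) = eps 2 (ψ x)) ∧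
    (¬ ∃ ψ : (ℤ × ℤ) ≃ₗ[ℤ] (ℤ × ℤ), ∀ x, ψ (eps 6 x) = eps 3 (ψ x)) := by
  refine ⟨⟨eps6OneEquivEps2Three, eps6OneEquivEps2Three_intertwines⟩, ?_, ?_⟩
  · rintro ⟨ψ, hψ⟩
    exact absurd (dvd_of_eps_intertwined (by norm_num) ψ hψ) (by decide)
  · rintro ⟨ψ, hψ⟩
    exact absurd (dvd_of_eps_intertwined (by norm_num) ψ hψ) (by decide)
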